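/- arXiv:math/0412340 — 4 statements merged into one kernel-verified Lean document; each statement's English description precedes it below -/
import Mathlib

section
/- If a Stieltjes moment sequence (uₙ) factors as uₙ = sₙ tₙ where (sₙ) and (tₙ) are Stieltjes moment sequences, tₙ > 0 for all n, and (sₙ) is S-indeterminate, then (uₙ) is S-indeterminate. -/
open MeasureTheory

/-- `μ` is a measure on `[0,∞)` representing the Stieltjes moment sequence `s`. -/
def IsStieltjesRepr (μ : Measure ℝ) (s : ℕ → ℝ) : Prop :=
  μ (Set.Iio 0) = 0 ∧
    ∀ n : ℕ, Integrable (fun x => x ^ n) μ ∧ s n = ∫ x, x ^ n ∂μ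

/-- `s` is a Stieltjes moment sequence. -/
def IsStieltjesMomentSeq (s : ℕ → ℝ) : Prop :=
  ∃ μ : Measure ℝ, IsStieltjesRepr μ s

/-- A Stieltjes moment sequence is S-indeterminate if at least two different
measures on `[0,∞)` represent it. -/
def SIndeterminate (s : ℕ → ℝ) : Prop :=
  ∃ μ ν : Measure ℝ, IsStieltjesRepr μ s ∧ IsStieltjesRepr ν s ∧ μ ≠ ν

/-!
If `μ ≠ ν` both represent `s` and `ρ` represents `t`, the multiplicative convolutions
`μ ∗ₘ ρ` and `ν ∗ₘ ρ` both represent `u`, and they differ. Indeed the Mellin transform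
`σ ↦ ∫ x ^ σ` turns `∗ₘ` into a product and `∫ x ^ σ ∂ρ > 0` since `t 1 > 0`, so equal
convolutions would give `μ` and `ν` the same Mellin transform on `0 < σ < 1`. That transform
determines a measure on `(0, ∞)`: after pushing forward by `log` it is a moment generating
function on an interval, which by analytic continuation determines the characteristic function
of the exponentially tilted measure. The remaining atom at `0` is then fixed by the mass `s 0`.
-/

open ProbabilityTheory Set Filter
open scoped Topology

lemma eqOn_complexMGF_of_eqOn_mgf {p q : Measure ℝ} {a b : ℝ}
    (hp : ∀ σ ∈ Ioo a b, Integrable (fun x => Real.exp (σ * x)) p)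
    (hq : ∀ σ ∈ Ioo a b, Integrable (fun x => Real.exp (σ * x)) q)
    (h : EqOn (mgf id p) (mgf id q) (Ioo a b)) :
    EqOn (complexMGF id p) (complexMGF id q) {z : ℂ | z.re ∈ Ioo a b} := by
  rcases (Ioo a b).eq_empty_or_nonempty with hab | ⟨c, hc⟩
  · simp [hab]
  have hstrip : ∀ m : Measure ℝ, (∀ σ ∈ Ioo a b, Integrable (fun x => Real.exp (σ * x)) m) →
      AnalyticOnNhd ℂ (complexMGF id m) {z : ℂ | z.re ∈ Ioo a b} := fun m hm =>
    analyticOnNhd_complexMGF.mono fun z hz => interior_maximal hm isOpen_Ioo hz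
  have hreal : ∀ᶠ x : ℝ in 𝓝[≠] c, complexMGF id p x = complexMGF id q x := by
    filter_upwards [nhdsWithin_le_nhds (isOpen_Ioo.mem_nhds hc)] with x hx
    rw [complexMGF_ofReal, complexMGF_ofReal, h hx]
  have hofReal : Tendsto ((↑) : ℝ → ℂ) (𝓝[≠] c) (𝓝[≠] (c : ℂ)) :=
    tendsto_nhdsWithin_of_tendsto_nhds_of_eventually_within _
      (Complex.continuous_ofReal.tendsto c |>.mono_left nhdsWithin_le_nhds)
      (eventually_nhdsWithin_of_forall fun x hx => by simpa using hx)
  exact (hstrip p hp).eqOn_of_preconnected_of_frequently_eq (hstrip q hq)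
    ((convex_Ioo a b).linear_preimage Complex.reLm).isPreconnected (z₀ := (c : ℂ))
    (by simpa using hc) (hofReal.frequently hreal.frequently)

lemma charFun_withDensity_exp_mul (p : Measure ℝ) (c t : ℝ) :
    charFun (p.withDensity fun x => ENNReal.ofReal (Real.exp (c * x))) t
      = complexMGF id p (c + t * Complex.I) := by
  rw [charFun_apply, integral_withDensity_eq_integral_toReal_smul (by fun_prop)
    (ae_of_all _ fun _ => ENNReal.ofReal_lt_top)]
  refine integral_congr_ae (ae_of_all _ fun x => ?_)
  simp only [ENNReal.toReal_ofReal (Real.exp_pos _).le, id, RCLike.inner_apply, conj_trivial,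
    Complex.real_smul, Complex.ofReal_exp, ← Complex.exp_add]
  push_cast
  ring_nf

lemma withDensity_exp_mul_withDensity_exp_neg_mul (p : Measure ℝ) (c : ℝ) :
    (p.withDensity fun x => ENNReal.ofReal (Real.exp (c * x))).withDensity
      (fun x => ENNReal.ofReal (Real.exp (-c * x))) = p := by
  rw [← withDensity_mul _ (by fun_prop) (by fun_prop)]
  convert withDensity_one (μ := p)
  ext x
  simp [← ENNReal.ofReal_mul (Real.exp_pos _).le, ← Real.exp_add]

lemma exp_mul_log_ae_eq_rpow (μ : Measure ℝ) (σ : ℝ) :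
    (fun x => Real.exp (σ * Real.log x)) =ᵐ[μ.restrict (Ioi 0)] fun x => x ^ σ := by
  filter_upwards [ae_restrict_mem measurableSet_Ioi] with x hx
  rw [Real.rpow_def_of_pos hx, mul_comm]

lemma integrable_exp_mul_map_log_iff (μ : Measure ℝ) (σ : ℝ) :
    Integrable (fun u => Real.exp (σ * u)) ((μ.restrict (Ioi 0)).map Real.log)
      ↔ IntegrableOn (fun x => x ^ σ) (Ioi 0) μ := by
  rw [integrable_map_measure (by fun_prop) Real.measurable_log.aemeasurable]
  exact integrable_congr (exp_mul_log_ae_eq_rpow μ σ)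

lemma mgf_map_log (μ : Measure ℝ) (σ : ℝ) :
    mgf id ((μ.restrict (Ioi 0)).map Real.log) σ = ∫ x in Ioi 0, x ^ σ ∂μ := by
  rw [mgf, integral_map Real.measurable_log.aemeasurable (by fun_prop)]
  exact integral_congr_ae (exp_mul_log_ae_eq_rpow μ σ)

lemma map_exp_map_log_restrict_Ioi (μ : Measure ℝ) :
    ((μ.restrict (Ioi 0)).map Real.log).map Real.exp = μ.restrict (Ioi 0) := by
  rw [Measure.map_map Real.measurable_exp Real.measurable_log]
  refine (Measure.map_congr ?_).trans Measure.map_id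
  filter_upwards [ae_restrict_mem measurableSet_Ioi] with x hx
  exact Real.exp_log hx

namespace MeasureTheory.Measure

theorem ext_of_eqOn_mgf {p q : Measure ℝ} [IsFiniteMeasure p] [IsFiniteMeasure q]
    {a b : ℝ} (hab : a < b)
    (hp : ∀ σ ∈ Ioo a b, Integrable (fun x => Real.exp (σ * x)) p)
    (hq : ∀ σ ∈ Ioo a b, Integrable (fun x => Real.exp (σ * x)) q)
    (h : EqOn (mgf id p) (mgf id q) (Ioo a b)) : p = q := by
  obtain ⟨c, hc⟩ := nonempty_Ioo.2 hab
  have := isFiniteMeasure_withDensity_ofReal (hp c hc).2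
  have := isFiniteMeasure_withDensity_ofReal (hq c hc).2
  have htilt : p.withDensity (fun x => ENNReal.ofReal (Real.exp (c * x)))
      = q.withDensity (fun x => ENNReal.ofReal (Real.exp (c * x))) := by
    refine ext_of_charFun (funext fun t => ?_)
    rw [charFun_withDensity_exp_mul, charFun_withDensity_exp_mul]
    exact eqOn_complexMGF_of_eqOn_mgf hp hq h (by simpa using hc)
  rw [← withDensity_exp_mul_withDensity_exp_neg_mul p c, htilt,
    withDensity_exp_mul_withDensity_exp_neg_mul]

theorem restrict_Ioi_eq_of_setIntegral_rpow_eq {μ ν : Measure ℝ}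
    [IsFiniteMeasure μ] [IsFiniteMeasure ν] {a b : ℝ} (hab : a < b)
    (hμ : ∀ σ ∈ Ioo a b, IntegrableOn (fun x => x ^ σ) (Ioi 0) μ)
    (hν : ∀ σ ∈ Ioo a b, IntegrableOn (fun x => x ^ σ) (Ioi 0) ν)
    (h : ∀ σ ∈ Ioo a b, ∫ x in Ioi 0, x ^ σ ∂μ = ∫ x in Ioi 0, x ^ σ ∂ν) :
    μ.restrict (Ioi 0) = ν.restrict (Ioi 0) := by
  have hlog : (μ.restrict (Ioi 0)).map Real.log = (ν.restrict (Ioi 0)).map Real.log := by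
    refine ext_of_eqOn_mgf hab (fun σ hσ => ?_) (fun σ hσ => ?_) fun σ hσ => ?_
    · exact (integrable_exp_mul_map_log_iff μ σ).2 (hμ σ hσ)
    · exact (integrable_exp_mul_map_log_iff ν σ).2 (hν σ hσ)
    · simp only [mgf_map_log, h σ hσ]
  rw [← map_exp_map_log_restrict_Ioi μ, hlog, map_exp_map_log_restrict_Ioi]

end MeasureTheory.Measure

lemma integral_rpow_mconv {μ ν : Measure ℝ} [SFinite μ] [SFinite ν]
    (hμ : ∀ᵐ x ∂μ, 0 ≤ x) (hν : ∀ᵐ x ∂ν, 0 ≤ x) (σ : ℝ) :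
    ∫ x, x ^ σ ∂(μ ∗ₘ ν) = (∫ x, x ^ σ ∂μ) * ∫ x, x ^ σ ∂ν := by
  rw [Measure.mconv, integral_map (by fun_prop) (by fun_prop), ← integral_prod_mul]
  refine integral_congr_ae ?_
  filter_upwards [Measure.quasiMeasurePreserving_fst.ae hμ,
    Measure.quasiMeasurePreserving_snd.ae hν] with z hz₁ hz₂
  exact Real.mul_rpow hz₁ hz₂

lemma ae_nonneg_mconv {μ ν : Measure ℝ} [SFinite μ] [SFinite ν]
    (hμ : ∀ᵐ x ∂μ, 0 ≤ x) (hν : ∀ᵐ x ∂ν, 0 ≤ x) : ∀ᵐ x ∂(μ ∗ₘ ν), 0 ≤ x := by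
  rw [Measure.mconv, ae_map_iff (by fun_prop) measurableSet_Ici]
  filter_upwards [Measure.quasiMeasurePreserving_fst.ae hμ,
    Measure.quasiMeasurePreserving_snd.ae hν] with z hz₁ hz₂
  exact mul_nonneg hz₁ hz₂

namespace IsStieltjesRepr

variable {μ ν : Measure ℝ} {s t : ℕ → ℝ}

lemma isFiniteMeasure (hμ : IsStieltjesRepr μ s) : IsFiniteMeasure μ :=
  (integrable_const_iff.1 (by simpa using (hμ.2 0).1)).resolve_left one_ne_zero

lemma ae_nonneg (hμ : IsStieltjesRepr μ s) : ∀ᵐ x ∂μ, 0 ≤ x :=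
  ae_iff.2 (measure_mono_null (fun _ hx => not_le.1 hx) hμ.1)

lemma integrable_rpow (hμ : IsStieltjesRepr μ s) {σ : ℝ} (hσ : 0 ≤ σ) :
    Integrable (fun x => x ^ σ) μ := by
  have := hμ.isFiniteMeasure
  refine ((integrable_const 1).add (hμ.2 ⌈σ⌉₊).1).mono' (by fun_prop) ?_
  filter_upwards [hμ.ae_nonneg] with x hx
  rw [Real.norm_of_nonneg (Real.rpow_nonneg hx σ), Pi.add_apply]
  rcases le_total x 1 with hx1 | hx1
  · linarith [Real.rpow_le_one hx hx1 hσ, pow_nonneg hx ⌈σ⌉₊]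
  · have := Real.rpow_le_rpow_of_exponent_le hx1 (Nat.le_ceil σ)
    rw [Real.rpow_natCast] at this
    linarith

lemma setIntegral_Ioi_rpow (hμ : IsStieltjesRepr μ s) {σ : ℝ} (hσ : σ ≠ 0) :
    ∫ x in Ioi 0, x ^ σ ∂μ = ∫ x, x ^ σ ∂μ := by
  refine setIntegral_eq_integral_of_ae_compl_eq_zero ?_
  filter_upwards [hμ.ae_nonneg] with x hx hx0
  rw [le_antisymm (not_lt.1 hx0) hx, Real.zero_rpow hσ]

lemma measure_univ_eq (hμ : IsStieltjesRepr μ s) (hν : IsStieltjesRepr ν s) :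
    μ univ = ν univ := by
  have := hμ.isFiniteMeasure
  have := hν.isFiniteMeasure
  have h := (hμ.2 0).2.symm.trans (hν.2 0).2
  simp only [pow_zero, integral_const, smul_eq_mul, mul_one] at h
  exact (ENNReal.toReal_eq_toReal_iff' (measure_ne_top μ _) (measure_ne_top ν _)).1 h

lemma eq_smul_dirac_add_restrict_Ioi (hμ : IsStieltjesRepr μ s) :
    μ = μ {0} • Measure.dirac 0 + μ.restrict (Ioi 0) :=
  calc μ = μ.restrict (Ici 0) := (Measure.restrict_eq_self_of_ae_mem hμ.ae_nonneg).symm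
    _ = μ.restrict {0} + μ.restrict (Ioi 0) := by
      rw [← Ioi_insert, insert_eq, Measure.restrict_union (by simp) measurableSet_Ioi]
    _ = μ {0} • Measure.dirac 0 + μ.restrict (Ioi 0) := by rw [Measure.restrict_singleton]

theorem ext_of_integral_rpow_eq (hμ : IsStieltjesRepr μ s) (hν : IsStieltjesRepr ν s)
    (h : ∀ σ ∈ Ioo (0 : ℝ) 1, ∫ x, x ^ σ ∂μ = ∫ x, x ^ σ ∂ν) : μ = ν := by
  have := hμ.isFiniteMeasure
  have := hν.isFiniteMeasure
  have hIoi : μ.restrict (Ioi 0) = ν.restrict (Ioi 0) := by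
    refine Measure.restrict_Ioi_eq_of_setIntegral_rpow_eq zero_lt_one
      (fun σ hσ => (hμ.integrable_rpow hσ.1.le).integrableOn)
      (fun σ hσ => (hν.integrable_rpow hσ.1.le).integrableOn) fun σ hσ => ?_
    rw [hμ.setIntegral_Ioi_rpow hσ.1.ne', hν.setIntegral_Ioi_rpow hσ.1.ne', h σ hσ]
  have hatom : μ {0} = ν {0} := by
    have hmass := hμ.measure_univ_eq hν
    rw [hμ.eq_smul_dirac_add_restrict_Ioi, hν.eq_smul_dirac_add_restrict_Ioi, hIoi] at hmass
    simpa [measure_ne_top] using hmass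
  rw [hμ.eq_smul_dirac_add_restrict_Ioi, hν.eq_smul_dirac_add_restrict_Ioi, hatom, hIoi]

lemma integral_rpow_pos (hμ : IsStieltjesRepr μ s) (hs : s 1 ≠ 0) {σ : ℝ} (hσ : 0 < σ) :
    0 < ∫ x, x ^ σ ∂μ := by
  have hnonneg : 0 ≤ᵐ[μ] fun x => x ^ σ := hμ.ae_nonneg.mono fun x hx => Real.rpow_nonneg hx σ
  refine (integral_nonneg_of_ae hnonneg).lt_of_ne fun h0 => hs ?_
  have hzero := (integral_eq_zero_iff_of_nonneg_ae hnonneg (hμ.integrable_rpow hσ.le)).1 h0.symm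
  rw [(hμ.2 1).2]
  refine integral_eq_zero_of_ae ?_
  filter_upwards [hzero, hμ.ae_nonneg] with x hx hx0
  simpa [Real.rpow_eq_zero hx0 hσ.ne'] using hx

lemma mconv (hμ : IsStieltjesRepr μ s) (hν : IsStieltjesRepr ν t) :
    IsStieltjesRepr (μ ∗ₘ ν) (fun n => s n * t n) := by
  have := hμ.isFiniteMeasure
  have := hν.isFiniteMeasure
  refine ⟨?_, fun n => ⟨?_, ?_⟩⟩
  · exact measure_mono_null (fun _ hx => not_le.2 hx)
      (ae_iff.1 (ae_nonneg_mconv hμ.ae_nonneg hν.ae_nonneg))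
  · rw [Measure.mconv, integrable_map_measure (by fun_prop) (by fun_prop)]
    exact ((hμ.2 n).1.mul_prod (hν.2 n).1).congr (ae_of_all _ fun z => (mul_pow _ _ _).symm)
  · simp_rw [(hμ.2 n).2, (hν.2 n).2, ← Real.rpow_natCast]
    exact (integral_rpow_mconv hμ.ae_nonneg hν.ae_nonneg n).symm

end IsStieltjesRepr

theorem product_with_indeterminate_is_indeterminate_general
    (s t u : ℕ → ℝ) (h : ∀ n, u n = s n * t n)
    (ht : IsStieltjesMomentSeq t)
    (htpos : ∀ n, 0 < t n) (hsind : SIndeterminate s) :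
    SIndeterminate u := by
  obtain ⟨μ, ν, hμ, hν, hμν⟩ := hsind
  obtain ⟨ρ, hρ⟩ := ht
  have := hμ.isFiniteMeasure
  have := hν.isFiniteMeasure
  have := hρ.isFiniteMeasure
  obtain rfl : u = fun n => s n * t n := funext h
  refine ⟨μ ∗ₘ ρ, ν ∗ₘ ρ, hμ.mconv hρ, hν.mconv hρ, fun hconv => hμν ?_⟩
  refine hμ.ext_of_integral_rpow_eq hν fun σ hσ => ?_
  have hmellin := congrArg (fun m => ∫ x, x ^ σ ∂m) hconv
  simp only [integral_rpow_mconv hμ.ae_nonneg hρ.ae_nonneg,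
    integral_rpow_mconv hν.ae_nonneg hρ.ae_nonneg] at hmellin
  exact mul_right_cancel₀ (hρ.integral_rpow_pos (htpos 1).ne' hσ.1).ne' hmellin

theorem product_with_indeterminate_is_indeterminate
    (s t u : ℕ → ℝ) (h : ∀ n, u n = s n * t n)
    (hs : IsStieltjesMomentSeq s) (ht : IsStieltjesMomentSeq t)
    (hu : IsStieltjesMomentSeq u)
    (htpos : ∀ n, 0 < t n) (hsind : SIndeterminate s) :
    SIndeterminate u :=
  product_with_indeterminate_is_indeterminate_general s t u h ht htpos hsind
end

section
/- Let f be a Bernstein function, not identically zero, and suppose f'(s)/f(s) = ∫₀^∞ e^{−sx} dκ(x) for a nonnegative measure κ on [0,∞). Then κ({0}) = 0. -/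
/-!
A Bernstein function grows at most linearly: `0 ≤ 1 - e^{-sx} ≤ (1 + s) x / (1 + x)` gives
`0 ≤ f s ≤ (a + L) + (b + L) s` with `L = ∫ x / (1 + x) dν`. On the other hand the atom of `κ` at
`0` bounds the log-derivative from below, `κ({0}) ≤ ∫ e^{-sx} dκ = f'(s) / f(s)`. If `κ({0}) = c > 0`,
this forces `f > 0` and `f' ≥ c f`, so `e^{-cs} f(s)` is nondecreasing and `f` grows exponentially,
which contradicts the linear bound.
-/

open MeasureTheory Real Filter Topology Set Asymptotics

lemma measureReal_singleton_mul_le_integral {α : Type*} [MeasurableSpace α]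
    [MeasurableSingletonClass α] {μ : Measure α} {g : α → ℝ} (hg : Integrable g μ) (hg0 : 0 ≤ g)
    (x : α) : μ.real {x} * g x ≤ ∫ y, g y ∂μ := by
  rw [← smul_eq_mul, ← integral_singleton]
  exact setIntegral_le_integral hg (Eventually.of_forall hg0)

lemma measure_singleton_lt_top_of_integrable {α : Type*} [MeasurableSpace α] {μ : Measure α}
    {g : α → ℝ} (hg : Integrable g μ) {x : α} (hx : g x ≠ 0) : μ {x} < ⊤ :=
  (measure_mono (t := {y | ‖g x‖ ≤ ‖g y‖}) (singleton_subset_iff.2 (le_refl ‖g x‖))).trans_lt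
    (hg.measure_norm_ge_lt_top (norm_pos_iff.2 hx))

lemma monotoneOn_exp_neg_mul_mul_of_mul_le_deriv {f : ℝ → ℝ} {c t₀ : ℝ}
    (hf : ∀ s ∈ Ici t₀, DifferentiableAt ℝ f s) (h : ∀ s ∈ Ici t₀, c * f s ≤ deriv f s) :
    MonotoneOn (fun s => exp (-c * s) * f s) (Ici t₀) := by
  have hd : ∀ s ∈ Ici t₀, HasDerivAt (fun s => exp (-c * s) * f s)
      (exp (-c * s) * (deriv f s - c * f s)) s := fun s hs =>
    (((hasDerivAt_id' s).const_mul (-c)).exp.mul (hf s hs).hasDerivAt).congr_deriv (by ring)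
  refine monotoneOn_of_deriv_nonneg (convex_Ici t₀)
    (fun s hs => (hd s hs).continuousAt.continuousWithinAt)
    (fun s hs => (hd s (interior_subset hs)).differentiableAt.differentiableWithinAt)
    fun s hs => ?_
  rw [(hd s (interior_subset hs)).deriv]
  exact mul_nonneg (exp_pos _).le (sub_nonneg.2 (h s (interior_subset hs)))

lemma tendsto_exp_neg_mul_mul_affine_atTop (A B : ℝ) {c : ℝ} (hc : 0 < c) :
    Tendsto (fun s => exp (-c * s) * (A + B * s)) atTop (𝓝 0) := by
  have ho : (fun s : ℝ => A + B * s) =o[atTop] fun s => exp (c * s) := by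
    simpa using ((isLittleO_pow_exp_pos_mul_atTop 0 hc).const_mul_left A).add
      ((isLittleO_pow_exp_pos_mul_atTop 1 hc).const_mul_left B)
  refine ho.tendsto_div_nhds_zero.congr fun s => ?_
  rw [neg_mul, exp_neg, div_eq_inv_mul]

lemma nonpos_of_mul_le_deriv_of_le_affine {f : ℝ → ℝ} {c t₀ A B : ℝ} (hc : 0 < c)
    (hf : ∀ s ∈ Ici t₀, DifferentiableAt ℝ f s) (hderiv : ∀ s ∈ Ici t₀, c * f s ≤ deriv f s)
    (hle : ∀ s ∈ Ici t₀, f s ≤ A + B * s) : f t₀ ≤ 0 := by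
  have hmono := monotoneOn_exp_neg_mul_mul_of_mul_le_deriv hf hderiv
  have hbound : ∀ᶠ s in atTop, exp (-c * t₀) * f t₀ ≤ exp (-c * s) * (A + B * s) :=
    (eventually_ge_atTop t₀).mono fun s hs =>
      (hmono self_mem_Ici hs hs).trans (mul_le_mul_of_nonneg_left (hle s hs) (exp_pos _).le)
  exact nonpos_of_mul_nonpos_right
    (ge_of_tendsto (tendsto_exp_neg_mul_mul_affine_atTop A B hc) hbound) (exp_pos _)

lemma one_sub_exp_neg_mul_nonneg {s x : ℝ} (hs : 0 ≤ s) (hx : 0 ≤ x) :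
    0 ≤ 1 - exp (-s * x) :=
  sub_nonneg.2 (exp_le_one_iff.2 (by nlinarith))

lemma one_sub_exp_neg_mul_le {s x : ℝ} (hx : 0 ≤ x) :
    1 - exp (-s * x) ≤ (1 + s) * (x / (1 + x)) := by
  have h_one : 1 - exp (-s * x) ≤ 1 := by linarith [exp_pos (-s * x)]
  have h_lin : 1 - exp (-s * x) ≤ s * x := by linarith [add_one_le_exp (-s * x)]
  rw [← mul_div_assoc, le_div_iff₀ (by positivity)]
  nlinarith

section LevyMeasure

variable {ν : Measure ℝ}

lemma ae_pos_of_measure_Iic_zero (hν : ν (Iic 0) = 0) : ∀ᵐ x ∂ν, 0 < x :=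
  ae_iff.2 <| by simp only [not_lt]; exact hν

lemma integral_one_sub_exp_neg_mul_nonneg (hν : ν (Iic 0) = 0) {s : ℝ} (hs : 0 ≤ s) :
    0 ≤ ∫ x, (1 - exp (-s * x)) ∂ν :=
  integral_nonneg_of_ae <| (ae_pos_of_measure_Iic_zero hν).mono fun _ hx =>
    one_sub_exp_neg_mul_nonneg hs hx.le

lemma integral_one_sub_exp_neg_mul_le (hν : ν (Iic 0) = 0)
    (hlevy : Integrable (fun x => x / (1 + x)) ν) {s : ℝ} (hs : 0 ≤ s) :
    ∫ x, (1 - exp (-s * x)) ∂ν ≤ (1 + s) * ∫ x, x / (1 + x) ∂ν := by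
  rw [← integral_const_mul]
  refine integral_mono_of_nonneg ?_ (hlevy.const_mul _) ?_ <;>
    filter_upwards [ae_pos_of_measure_Iic_zero hν] with x hx
  exacts [one_sub_exp_neg_mul_nonneg hs hx.le, one_sub_exp_neg_mul_le hx.le]

end LevyMeasure

theorem bernstein_logderiv_repr_measure_no_atom_at_zero_general
    (f : ℝ → ℝ) (a b : ℝ) (ν κ : Measure ℝ)
    (ha : 0 ≤ a) (hb : 0 ≤ b)
    (hsupp : ν (Set.Iic 0) = 0)
    (hlevy : Integrable (fun x => x / (1 + x)) ν)
    (hrep : ∀ s : ℝ, 0 < s →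
      f s = a + b * s + ∫ x, (1 - Real.exp (-s * x)) ∂ν)
    (hκint : ∀ s : ℝ, 0 < s → Integrable (fun x => Real.exp (-s * x)) κ)
    (hκ : ∀ s : ℝ, 0 < s → deriv f s / f s = ∫ x, Real.exp (-s * x) ∂κ) :
    κ {0} = 0 := by
  set c := κ.real {0}
  set L := ∫ x, x / (1 + x) ∂ν
  have hc_le : ∀ s, 0 < s → c ≤ deriv f s / f s := fun s hs => by
    simpa [hκ s hs] using
      measureReal_singleton_mul_le_integral (hκint s hs) (fun x => (exp_pos (-s * x)).le) 0
  have hf_nonneg : ∀ s, 0 < s → 0 ≤ f s := fun s hs => by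
    have := integral_one_sub_exp_neg_mul_nonneg hsupp hs.le
    rw [hrep s hs]
    positivity
  have hf_le : ∀ s, 0 < s → f s ≤ (a + L) + (b + L) * s := fun s hs => by
    have := integral_one_sub_exp_neg_mul_le hsupp hlevy hs.le
    rw [hrep s hs]
    linarith
  rw [← measureReal_eq_zero_iff
    (measure_singleton_lt_top_of_integrable (hκint 1 one_pos) (by simp)).ne]
  refine le_antisymm (not_lt.1 fun hc => ?_) measureReal_nonneg
  -- `f'/f ≥ c > 0` rules out the junk values `f s = 0` and `deriv f s = 0` (non-differentiability).
  have hgrowth : ∀ s, 0 < s → 0 < f s ∧ c * f s ≤ deriv f s := fun s hs => by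
    have hpos : 0 < f s := (hf_nonneg s hs).lt_of_ne' fun h0 => by
      simpa [h0] using hc.trans_le (hc_le s hs)
    exact ⟨hpos, (le_div_iff₀ hpos).1 (hc_le s hs)⟩
  have hdiff : ∀ s, 0 < s → DifferentiableAt ℝ f s := fun s hs =>
    differentiableAt_of_deriv_ne_zero ((mul_pos hc (hgrowth s hs).1).trans_le (hgrowth s hs).2).ne'
  exact (nonpos_of_mul_le_deriv_of_le_affine hc (fun s hs => hdiff s (one_pos.trans_le hs))
    (fun s hs => (hgrowth s (one_pos.trans_le hs)).2)
    (fun s hs => hf_le s (one_pos.trans_le hs))).not_gt (hgrowth 1 one_pos).1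

theorem bernstein_logderiv_repr_measure_no_atom_at_zero
    (f : ℝ → ℝ) (a b : ℝ) (ν κ : Measure ℝ)
    (ha : 0 ≤ a) (hb : 0 ≤ b)
    (hsupp : ν (Set.Iic 0) = 0)
    (hlevy : Integrable (fun x => x / (1 + x)) ν)
    (hrep : ∀ s : ℝ, 0 < s →
      f s = a + b * s + ∫ x, (1 - Real.exp (-s * x)) ∂ν)
    (hnonzero : ∃ s : ℝ, 0 < s ∧ f s ≠ 0)
    (hκsupp : κ (Set.Iio 0) = 0)
    (hκint : ∀ s : ℝ, 0 < s → Integrable (fun x => Real.exp (-s * x)) κ)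
    (hκ : ∀ s : ℝ, 0 < s → deriv f s / f s = ∫ x, Real.exp (-s * x) ∂κ) :
    κ {0} = 0 :=
  bernstein_logderiv_repr_measure_no_atom_at_zero_general f a b ν κ ha hb hsupp hlevy hrep hκint hκ
end

section
/- Fix 0 < q < 1 and 0 ≤ b < a < 1. The probability measure μ(a,b;q) = ((a;q)_∞/(b;q)_∞) Σₖ ((b/a;q)ₖ/(q;q)ₖ) aᵏ δ_{qᵏ} on (0,1] has nth moment (a;q)ₙ/(b;q)ₙ for every n ≥ 0. -/
open MeasureTheory Finset

/-- Finite q-Pochhammer symbol `(z;q)_n`. -/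
noncomputable def qPoch (z q : ℝ) (n : ℕ) : ℝ := ∏ k ∈ Finset.range n, (1 - z * q ^ k)

/-- Infinite q-Pochhammer symbol `(z;q)_∞`. -/
noncomputable def qPochInf (z q : ℝ) : ℝ := ∏' k : ℕ, (1 - z * q ^ k)

/-!
Against `δ_{q^k}` the monomial `x ^ n` takes the value `(q^k)^n`, so the `n`-th moment is
`C · ∑ₖ (c;q)ₖ/(q;q)ₖ (a qⁿ)ᵏ` with `c = b/a` and `C = (a;q)_∞/(b;q)_∞`. By the q-binomial theorem
this is `C · (b qⁿ;q)_∞/(a qⁿ;q)_∞`, and splitting off the first `n` factors of `(a;q)_∞` and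
`(b;q)_∞` leaves `(a;q)ₙ/(b;q)ₙ`.

The q-binomial theorem comes from the functional equation `(1 - z) F(z) = (1 - c z) F(q z)` of
`F(z) = ∑ₖ (c;q)ₖ/(q;q)ₖ zᵏ`: iterating it gives `F(z) (z;q)_N = F(q^N z) (c z;q)_N`, and
`F(q^N z) → F(0) = 1` by dominated convergence.
-/

open Filter Topology

section qPochhammer

variable {x q : ℝ}

theorem qPoch_succ (x q : ℝ) (n : ℕ) : qPoch x q (n + 1) = qPoch x q n * (1 - x * q ^ n) :=
  prod_range_succ _ _

theorem one_sub_mul_pow_pos (hq0 : 0 ≤ q) (hq1 : q < 1) (hx : x < 1) (k : ℕ) :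
    0 < 1 - x * q ^ k := by
  have h0 : 0 ≤ q ^ k := pow_nonneg hq0 k
  have h1 : q ^ k ≤ 1 := pow_le_one₀ hq0 hq1.le
  rcases le_total 0 x with hx0 | hx0 <;> nlinarith

theorem qPoch_pos (hq0 : 0 ≤ q) (hq1 : q < 1) (hx : x < 1) (n : ℕ) : 0 < qPoch x q n :=
  prod_pos fun k _ => one_sub_mul_pow_pos hq0 hq1 hx k

theorem summable_norm_neg_mul_pow (x : ℝ) (hq : |q| < 1) :
    Summable fun k : ℕ => ‖-(x * q ^ k)‖ := by
  simpa [abs_mul, abs_pow] using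
    (summable_geometric_of_lt_one (abs_nonneg q) hq).mul_left |x|

theorem multipliable_qPoch (x : ℝ) (hq : |q| < 1) : Multipliable fun k : ℕ => 1 - x * q ^ k := by
  simpa [sub_eq_add_neg] using multipliable_one_add_of_summable (summable_norm_neg_mul_pow x hq)

theorem tendsto_qPoch_qPochInf (x : ℝ) (hq : |q| < 1) :
    Tendsto (qPoch x q) atTop (𝓝 (qPochInf x q)) := by
  unfold qPoch qPochInf
  exact (multipliable_qPoch x hq).hasProd.tendsto_prod_nat

theorem qPoch_mul_qPochInf (x : ℝ) (hq : |q| < 1) (n : ℕ) :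
    qPoch x q n * qPochInf (x * q ^ n) q = qPochInf x q := by
  have hshift : (fun i => 1 - x * q ^ (i + n)) = fun i => 1 - x * q ^ n * q ^ i := by
    ext i
    ring
  have h := Multipliable.prod_mul_tprod_nat_mul' (f := fun i => 1 - x * q ^ i) (k := n)
    (by rw [hshift]; exact multipliable_qPoch _ hq)
  rwa [hshift] at h

theorem qPochInf_pos (hq0 : 0 ≤ q) (hq1 : q < 1) (hx : x < 1) : 0 < qPochInf x q := by
  have hq : |q| < 1 := by rwa [abs_of_nonneg hq0]
  have hne : qPochInf x q ≠ 0 := by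
    simpa [qPochInf, sub_eq_add_neg] using tprod_one_add_ne_zero_of_summable
      (fun k => by simpa [← sub_eq_add_neg] using (one_sub_mul_pow_pos hq0 hq1 hx k).ne')
      (summable_norm_neg_mul_pow x hq)
  exact hne.symm.lt_of_le (tprod_nonneg fun k => (one_sub_mul_pow_pos hq0 hq1 hx k).le)

theorem qPochInf_le_qPoch (hq0 : 0 ≤ q) (hq1 : q < 1) (hx0 : 0 ≤ x) (hx1 : x < 1) (n : ℕ) :
    qPochInf x q ≤ qPoch x q n := by
  have hq : |q| < 1 := by rwa [abs_of_nonneg hq0]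
  refine Antitone.le_of_tendsto (antitone_nat_of_succ_le fun k => ?_)
    (tendsto_qPoch_qPochInf x hq) n
  rw [qPoch_succ]
  exact mul_le_of_le_one_right (qPoch_pos hq0 hq1 hx1 k).le
    (sub_le_self _ (mul_nonneg hx0 (pow_nonneg hq0 k)))

end qPochhammer

section qBinomial

variable {c q z : ℝ}

noncomputable def qBinomialSeriesCoeff (c q : ℝ) (k : ℕ) : ℝ := qPoch c q k / qPoch q q k

noncomputable def qBinomialSeries (c q z : ℝ) : ℝ := ∑' k, qBinomialSeriesCoeff c q k * z ^ k

theorem qBinomialSeriesCoeff_zero (c q : ℝ) : qBinomialSeriesCoeff c q 0 = 1 := by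
  simp [qBinomialSeriesCoeff, qPoch]

theorem qBinomialSeriesCoeff_succ_mul (hq0 : 0 ≤ q) (hq1 : q < 1) (k : ℕ) :
    qBinomialSeriesCoeff c q (k + 1) * (1 - q * q ^ k) =
      qBinomialSeriesCoeff c q k * (1 - c * q ^ k) := by
  rw [qBinomialSeriesCoeff, qBinomialSeriesCoeff, qPoch_succ, qPoch_succ, div_mul_eq_mul_div,
    div_mul_eq_mul_div, mul_div_mul_right _ _ (one_sub_mul_pow_pos hq0 hq1 hq1 k).ne']

theorem qBinomialSeriesCoeff_nonneg (hq0 : 0 ≤ q) (hq1 : q < 1) (hc1 : c < 1) (k : ℕ) :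
    0 ≤ qBinomialSeriesCoeff c q k :=
  div_nonneg (qPoch_pos hq0 hq1 hc1 k).le (qPoch_pos hq0 hq1 hq1 k).le

theorem qBinomialSeriesCoeff_le (hq0 : 0 ≤ q) (hq1 : q < 1) (hc0 : 0 ≤ c) (hc1 : c < 1)
    (k : ℕ) : qBinomialSeriesCoeff c q k ≤ (qPochInf q q)⁻¹ := by
  have hnum : qPoch c q k ≤ 1 :=
    prod_le_one (fun j _ => (one_sub_mul_pow_pos hq0 hq1 hc1 j).le)
      (fun j _ => sub_le_self _ (mul_nonneg hc0 (pow_nonneg hq0 j)))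
  calc qBinomialSeriesCoeff c q k ≤ 1 / qPoch q q k :=
        div_le_div_of_nonneg_right hnum (qPoch_pos hq0 hq1 hq1 k).le
    _ ≤ (qPochInf q q)⁻¹ := by
        rw [one_div]
        exact inv_anti₀ (qPochInf_pos hq0 hq1 hq1) (qPochInf_le_qPoch hq0 hq1 hq0 hq1 k)

theorem summable_qBinomialSeries (hq0 : 0 ≤ q) (hq1 : q < 1) (hc0 : 0 ≤ c) (hc1 : c < 1)
    (hz : |z| < 1) :
    Summable fun k => qBinomialSeriesCoeff c q k * z ^ k := by
  refine .of_norm_bounded ((summable_geometric_of_lt_one (abs_nonneg z) hz).mul_left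
    (qPochInf q q)⁻¹) fun k => ?_
  rw [norm_mul, norm_pow, Real.norm_eq_abs, Real.norm_eq_abs,
    abs_of_nonneg (qBinomialSeriesCoeff_nonneg hq0 hq1 hc1 k)]
  exact mul_le_mul_of_nonneg_right (qBinomialSeriesCoeff_le hq0 hq1 hc0 hc1 k)
    (pow_nonneg (abs_nonneg z) k)

theorem qBinomialSeries_functional_eq (hq0 : 0 ≤ q) (hq1 : q < 1) (hc0 : 0 ≤ c) (hc1 : c < 1)
    (hz : |z| < 1) :
    (1 - z) * qBinomialSeries c q z = (1 - c * z) * qBinomialSeries c q (q * z) := by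
  have hqz : |q * z| < 1 := by
    rw [abs_mul, abs_of_nonneg hq0]
    nlinarith [abs_nonneg z]
  set A := qBinomialSeriesCoeff c q
  have hF : HasSum (fun k => A k * z ^ k) (qBinomialSeries c q z) :=
    (summable_qBinomialSeries hq0 hq1 hc0 hc1 hz).hasSum
  have hFq : HasSum (fun k => A k * (q * z) ^ k) (qBinomialSeries c q (q * z)) :=
    (summable_qBinomialSeries hq0 hq1 hc0 hc1 hqz).hasSum
  -- the `(k+1)`-st term of `F z - F (q z)` is the `k`-th term of `z F z - c z F (q z)`
  have hterm (k : ℕ) : z * (A k * z ^ k) - c * z * (A k * (q * z) ^ k) =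
      A (k + 1) * z ^ (k + 1) - A (k + 1) * (q * z) ^ (k + 1) := by
    linear_combination -z ^ (k + 1) * qBinomialSeriesCoeff_succ_mul (c := c) hq0 hq1 k
  have hshift := (hF.mul_left z).sub (hFq.mul_left (c * z))
  simp only [hterm] at hshift
  have hdiff := (hasSum_nat_add_iff' (f := fun k => A k * z ^ k - A k * (q * z) ^ k) 1).1
    (by simpa using hshift)
  linear_combination (hF.sub hFq).unique hdiff

theorem qBinomialSeries_mul_qPoch (hq0 : 0 ≤ q) (hq1 : q < 1) (hc0 : 0 ≤ c) (hc1 : c < 1)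
    (hz : |z| < 1) (N : ℕ) :
    qBinomialSeries c q z * qPoch z q N = qBinomialSeries c q (q ^ N * z) * qPoch (c * z) q N := by
  induction N with
  | zero => simp [qPoch]
  | succ N ih =>
    have hqNz : |q ^ N * z| < 1 := by
      rw [abs_mul, abs_of_nonneg (pow_nonneg hq0 N)]
      exact lt_of_le_of_lt (mul_le_of_le_one_left (abs_nonneg z) (pow_le_one₀ hq0 hq1.le)) hz
    have step := qBinomialSeries_functional_eq hq0 hq1 hc0 hc1 hqNz
    rw [qPoch_succ, qPoch_succ, pow_succ', mul_assoc]
    linear_combination (1 - z * q ^ N) * ih + qPoch (c * z) q N * step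

theorem tendsto_qBinomialSeries_pow_mul (hq0 : 0 ≤ q) (hq1 : q < 1) (hc0 : 0 ≤ c) (hc1 : c < 1)
    (hz : |z| < 1) : Tendsto (fun N => qBinomialSeries c q (q ^ N * z)) atTop (𝓝 1) := by
  have hlim : (1 : ℝ) = ∑' k, qBinomialSeriesCoeff c q k * (0 : ℝ) ^ k := by
    rw [tsum_eq_single 0 fun k hk => by simp [hk], qBinomialSeriesCoeff_zero, pow_zero, mul_one]
  rw [hlim]
  refine tendsto_tsum_of_dominated_convergence
    (summable_qBinomialSeries hq0 hq1 hc0 hc1 (z := |z|) (by rwa [abs_abs])) (fun k => ?_)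
    (Eventually.of_forall fun N k => ?_)
  · have hqN := (tendsto_pow_atTop_nhds_zero_of_lt_one hq0 hq1).mul_const z
    rw [zero_mul] at hqN
    exact ((hqN.pow k).const_mul _)
  · rw [norm_mul, norm_pow, Real.norm_eq_abs, Real.norm_eq_abs,
      abs_of_nonneg (qBinomialSeriesCoeff_nonneg hq0 hq1 hc1 k), abs_mul,
      abs_of_nonneg (pow_nonneg hq0 N)]
    exact mul_le_mul_of_nonneg_left (pow_le_pow_left₀ (by positivity)
      (mul_le_of_le_one_left (abs_nonneg z) (pow_le_one₀ hq0 hq1.le)) k)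
      (qBinomialSeriesCoeff_nonneg hq0 hq1 hc1 k)

theorem qBinomialSeries_mul_qPochInf (hq0 : 0 ≤ q) (hq1 : q < 1) (hc0 : 0 ≤ c) (hc1 : c < 1)
    (hz : |z| < 1) : qBinomialSeries c q z * qPochInf z q = qPochInf (c * z) q := by
  have hq : |q| < 1 := by rwa [abs_of_nonneg hq0]
  refine tendsto_nhds_unique ((tendsto_qPoch_qPochInf z hq).const_mul _) ?_
  simp only [qBinomialSeries_mul_qPoch hq0 hq1 hc0 hc1 hz]
  simpa using (tendsto_qBinomialSeries_pow_mul hq0 hq1 hc0 hc1 hz).mul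
    (tendsto_qPoch_qPochInf (c * z) hq)

theorem hasSum_qBinomial (hq0 : 0 ≤ q) (hq1 : q < 1) (hc0 : 0 ≤ c) (hc1 : c < 1)
    (hz : |z| < 1) :
    HasSum (fun k => qPoch c q k / qPoch q q k * z ^ k) (qPochInf (c * z) q / qPochInf z q) := by
  have hz1 : z < 1 := (le_abs_self z).trans_lt hz
  rw [← qBinomialSeries_mul_qPochInf hq0 hq1 hc0 hc1 hz,
    mul_div_cancel_right₀ _ (qPochInf_pos hq0 hq1 hz1).ne']
  exact (summable_qBinomialSeries hq0 hq1 hc0 hc1 hz).hasSum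

end qBinomial

theorem integral_sum_ofReal_smul_dirac {α ι E : Type*} [MeasurableSpace α] [Countable ι]
    [NormedAddCommGroup E] [NormedSpace ℝ E] [CompleteSpace E] {f : α → E}
    (hf : StronglyMeasurable f)
    {w : ι → ℝ} (hw : ∀ i, 0 ≤ w i) (p : ι → α) (hsum : Summable fun i => w i * ‖f (p i)‖) :
    ∫ x, f x ∂(Measure.sum fun i => ENNReal.ofReal (w i) • Measure.dirac (p i)) =
      ∑' i, w i • f (p i) := by
  have hlint (i : ι) : ∫⁻ x, ‖f x‖ₑ ∂(ENNReal.ofReal (w i) • Measure.dirac (p i)) =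
      ENNReal.ofReal (w i * ‖f (p i)‖) := by
    rw [lintegral_smul_measure, lintegral_dirac' _ hf.enorm, smul_eq_mul,
      ENNReal.ofReal_mul (hw i), ofReal_norm]
  have hint : Integrable f (Measure.sum fun i => ENNReal.ofReal (w i) • Measure.dirac (p i)) := by
    refine ⟨hf.aestronglyMeasurable, ?_⟩
    rw [HasFiniteIntegral, lintegral_sum_measure, tsum_congr hlint,
      ← ENNReal.ofReal_tsum_of_nonneg (fun i => mul_nonneg (hw i) (norm_nonneg _)) hsum]
    exact ENNReal.ofReal_lt_top
  rw [integral_sum_measure hint]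
  refine tsum_congr fun i => ?_
  rw [integral_smul_measure, integral_dirac' _ _ hf, ENNReal.toReal_ofReal (hw i)]

theorem hasSum_qBeta_moment {q a b : ℝ} (hq0 : 0 ≤ q) (hq1 : q < 1) (hb : 0 ≤ b) (hba : b < a)
    (ha1 : a < 1) (n : ℕ) :
    HasSum (fun k => qPochInf a q / qPochInf b q * (qPoch (b / a) q k / qPoch q q k) * a ^ k *
      (q ^ k) ^ n) (qPoch a q n / qPoch b q n) := by
  have ha0 : 0 < a := hb.trans_lt hba
  have hq : |q| < 1 := by rwa [abs_of_nonneg hq0]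
  have haz : |a * q ^ n| < 1 := by
    rw [abs_of_nonneg (by positivity)]
    exact (mul_le_of_le_one_right ha0.le (pow_le_one₀ hq0 hq1.le)).trans_lt ha1
  have hbz : b * q ^ n < 1 :=
    (mul_le_of_le_one_right hb (pow_le_one₀ hq0 hq1.le)).trans_lt (hba.trans ha1)
  have hseries := (hasSum_qBinomial hq0 hq1 (div_nonneg hb ha0.le) ((div_lt_one ha0).2 hba)
    haz).mul_left (qPochInf a q / qPochInf b q)
  rw [show b / a * (a * q ^ n) = b * q ^ n by field_simp] at hseries
  have hvalue : qPochInf a q / qPochInf b q * (qPochInf (b * q ^ n) q / qPochInf (a * q ^ n) q) =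
      qPoch a q n / qPoch b q n := by
    rw [← qPoch_mul_qPochInf a hq n, ← qPoch_mul_qPochInf b hq n]
    have hPa := (qPochInf_pos hq0 hq1 ((le_abs_self _).trans_lt haz)).ne'
    have hPb := (qPochInf_pos hq0 hq1 hbz).ne'
    generalize qPochInf (a * q ^ n) q = Pa at hPa ⊢
    generalize qPochInf (b * q ^ n) q = Pb at hPb ⊢
    field_simp
  rw [← hvalue]
  exact hseries.congr_fun fun k => by ring

theorem qBeta_measure_moments (q a b : ℝ) (hq0 : 0 < q) (hq1 : q < 1)
    (hb : 0 ≤ b) (hba : b < a) (ha1 : a < 1) :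
    ∀ n : ℕ,
      ∫ x, x ^ n ∂(Measure.sum fun k : ℕ =>
          (ENNReal.ofReal ((qPochInf a q / qPochInf b q) *
            (qPoch (b / a) q k / qPoch q q k) * a ^ k)) • Measure.dirac ((q : ℝ) ^ k)) =
        qPoch a q n / qPoch b q n := by
  intro n
  have hb1 : b < 1 := hba.trans ha1
  have hweight (k : ℕ) :
      0 ≤ qPochInf a q / qPochInf b q * (qPoch (b / a) q k / qPoch q q k) * a ^ k :=
    mul_nonneg (mul_nonneg (div_nonneg (qPochInf_pos hq0.le hq1 ha1).le
      (qPochInf_pos hq0.le hq1 hb1).le) (qBinomialSeriesCoeff_nonneg hq0.le hq1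
        ((div_lt_one (hb.trans_lt hba)).2 hba) k)) (pow_nonneg (hb.trans hba.le) k)
  have hmoment := hasSum_qBeta_moment hq0.le hq1 hb hba ha1 n
  rw [integral_sum_ofReal_smul_dirac (continuous_pow n).stronglyMeasurable hweight (q ^ ·)
    (by simpa [abs_of_nonneg hq0.le] using hmoment.summable)]
  exact hmoment.tsum_eq
end

section
/- For 0 < q < 1, the sequence sₙ = q^{−n(n+1)/2} is a Stieltjes moment sequence that is S-indeterminate; in fact the densities v_c(x) for c = 1 give one solution and the discrete measure supported on {q^{−k}} obtained from the q-analysis gives another, so at least two distinct measures on (0,∞) share the moments q^{−n(n+1)/2}. -/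
/-! If `L = log (1/q)` and `T` is Gaussian with mean `L/2` and variance `L`, then `v_1` is
the density of `exp T`, whose moments are
`E[exp (n T)] = exp (n L/2 + n² L/2) = q^(-n(n+1)/2)`.
Reweighting the Gaussian by `1 + sin (2π t / L)` keeps these moments: the extra term is the
imaginary part of the complex moment generating function at `n + 2πi/L`, which is
`exp (⋯) * sin ((2n+1)π) = 0`. The weight is not a.e. `1`, so the two image measures differ. -/

open MeasureTheory Real

/-- The log-normal type density `v_c` associated with `q`. -/
noncomputable def vDensity (q c x : ℝ) : ℝ :=
  q ^ (c / 8) / Real.sqrt (2 * Real.pi * Real.log (1 / q ^ c)) *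
    x ^ (-(1 / 2) : ℝ) *
    Real.exp (-(Real.log x) ^ 2 / (2 * Real.log (1 / q ^ c)))

open Set ProbabilityTheory
open scoped NNReal ENNReal

lemma map_exp_withDensity (g : ℝ → ℝ≥0∞) :
    (volume.withDensity g).map exp =
      (volume.restrict (Ioi 0)).withDensity fun x => ENNReal.ofReal x⁻¹ * g (log x) := by
  ext s hs
  have hpre : MeasurableSet (exp ⁻¹' s) := measurable_exp hs
  have himage : exp '' (exp ⁻¹' s) = s ∩ Ioi 0 := by
    rw [image_preimage_eq_inter_range, range_exp]
  rw [Measure.map_apply measurable_exp hs, withDensity_apply _ hpre, withDensity_apply _ hs,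
    Measure.restrict_restrict hs, ← himage, lintegral_image_eq_lintegral_abs_deriv_mul hpre
      (fun t _ => (hasDerivAt_exp t).hasDerivWithinAt) exp_injective.injOn]
  refine setLIntegral_congr_fun hpre fun t _ => ?_
  rw [abs_of_pos (exp_pos t), log_exp, ← mul_assoc, ← ENNReal.ofReal_mul (exp_pos t).le,
    mul_inv_cancel₀ (exp_pos t).ne', ENNReal.ofReal_one, one_mul]

lemma map_exp_injective : Function.Injective (Measure.map exp : Measure ℝ → Measure ℝ) :=
  (MeasurableEmbedding.of_measurable_inverse measurable_exp (by simp [measurableSet_Ioi])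
    measurable_log log_exp).map_injective

lemma isStieltjesRepr_map_exp_iff {ρ : Measure ℝ} {s : ℕ → ℝ} :
    IsStieltjesRepr (ρ.map exp) s ↔
      ∀ n : ℕ, Integrable (fun t => exp (n * t)) ρ ∧ s n = ∫ t, exp (n * t) ∂ρ := by
  have hIio : ρ.map exp (Iio 0) = 0 := by
    rw [Measure.map_apply measurable_exp measurableSet_Iio]
    convert measure_empty (μ := ρ)
    ext t
    simpa using (exp_pos t).le
  simp only [IsStieltjesRepr, hIio, true_and]
  refine forall_congr' fun n => ?_
  rw [integrable_map_measure (by fun_prop) measurable_exp.aemeasurable,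
    integral_map measurable_exp.aemeasurable (by fun_prop)]
  simp only [Function.comp_def, ← exp_nat_mul]

lemma vDensity_one_eq_inv_mul_gaussianPDFReal {q x : ℝ} (hq0 : 0 < q) (hq1 : q < 1)
    (hx : 0 < x) :
    vDensity q 1 x = x⁻¹ * gaussianPDFReal (-log q / 2) (-log q).toNNReal (log x) := by
  have hL : 0 < -log q := neg_pos.mpr (log_neg hq0 hq1)
  have hexp : exp (log q * (1 / 8)) * exp (log x * -(1 / 2)) *
      exp (-log x ^ 2 / (2 * -log q)) =
      exp (-log x) * exp (-(log x - -log q / 2) ^ 2 / (2 * -log q)) := by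
    have hlog : log q ≠ 0 := (log_neg hq0 hq1).ne
    simp only [← exp_add]
    congr 1
    field_simp
    ring
  rw [vDensity, gaussianPDFReal, rpow_one, one_div q, log_inv, coe_toNNReal _ hL.le,
    rpow_def_of_pos hq0, rpow_def_of_pos hx, ← exp_log (inv_pos.mpr hx), log_inv]
  linear_combination (√(2 * π * -log q))⁻¹ * hexp

lemma withDensity_vDensity_one_eq_map_exp {q : ℝ} (hq0 : 0 < q) (hq1 : q < 1) :
    (volume.restrict (Ioi 0)).withDensity (fun x => ENNReal.ofReal (vDensity q 1 x)) =
      (gaussianReal (-log q / 2) (-log q).toNNReal).map exp := by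
  have hv : (-log q).toNNReal ≠ 0 := by simpa using log_neg hq0 hq1
  rw [gaussianReal_of_var_ne_zero _ hv, map_exp_withDensity]
  refine withDensity_congr_ae (ae_restrict_of_forall_mem measurableSet_Ioi fun x hx => ?_)
  dsimp only
  rw [vDensity_one_eq_inv_mul_gaussianPDFReal hq0 hq1 hx, gaussianPDF,
    ENNReal.ofReal_mul (inv_pos.mpr hx).le]

lemma integral_exp_mul_gaussianReal (μ : ℝ) (v : ℝ≥0) (a : ℝ) :
    ∫ x, exp (a * x) ∂gaussianReal μ v = exp (μ * a + v * a ^ 2 / 2) :=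
  congrFun mgf_id_gaussianReal a

lemma integral_exp_mul_mul_sin_gaussianReal (μ : ℝ) (v : ℝ≥0) (a ω : ℝ) :
    ∫ x, exp (a * x) * sin (ω * x) ∂gaussianReal μ v =
      exp (μ * a + v * (a ^ 2 - ω ^ 2) / 2) * sin (ω * (μ + v * a)) := by
  set z : ℂ := a + ω * Complex.I
  have hint : Integrable (fun x : ℝ => Complex.exp (z * x)) (gaussianReal μ v) :=
    integrable_cexp_mul_of_re_mem_integrableExpSet (X := id) aemeasurable_id (by simp)
  calc ∫ x, exp (a * x) * sin (ω * x) ∂gaussianReal μ v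
      = ∫ x, (Complex.exp (z * x)).im ∂gaussianReal μ v := by
        congr with x
        simp [z, Complex.exp_im]
    _ = (complexMGF id (gaussianReal μ v) z).im := integral_im hint
    _ = exp (μ * a + v * (a ^ 2 - ω ^ 2) / 2) * sin (ω * (μ + v * a)) := by
      rw [complexMGF_id_gaussianReal, Complex.exp_im]
      simp only [pow_two, Complex.add_re, Complex.mul_re, Complex.ofReal_re, Complex.I_re,
        mul_zero, Complex.ofReal_im, Complex.I_im, mul_one, sub_self, add_zero, Complex.add_im,
        Complex.mul_im, zero_add, sub_zero, Complex.div_ofNat_re, zero_mul, Complex.div_ofNat_im, z]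
      ring_nf

lemma integrable_and_integral_exp_mul_withDensity_one_add_sin (μ : ℝ) (v : ℝ≥0)
    (a ω : ℝ) :
    Integrable (fun x => exp (a * x))
        ((gaussianReal μ v).withDensity fun x => ENNReal.ofReal (1 + sin (ω * x))) ∧
      ∫ x, exp (a * x) ∂(gaussianReal μ v).withDensity
          (fun x => ENNReal.ofReal (1 + sin (ω * x))) =
        exp (μ * a + v * a ^ 2 / 2) +
          exp (μ * a + v * (a ^ 2 - ω ^ 2) / 2) * sin (ω * (μ + v * a)) := by
  set f : ℝ → ℝ≥0 := fun x => (1 + sin (ω * x)).toNNReal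
  have hf : Measurable f := by fun_prop
  have hf_smul : ∀ x, f x • exp (a * x) = exp (a * x) + exp (a * x) * sin (ω * x) := by
    intro x
    rw [NNReal.smul_def, smul_eq_mul, coe_toNNReal _ (by linarith [neg_one_le_sin (ω * x)])]
    ring
  have hexp : Integrable (fun x => exp (a * x)) (gaussianReal μ v) :=
    integrable_exp_mul_gaussianReal a
  have hsin : Integrable (fun x => exp (a * x) * sin (ω * x)) (gaussianReal μ v) :=
    hexp.mul_bdd (by fun_prop) (ae_of_all _ fun x => by simpa using abs_sin_le_one (ω * x))
  change Integrable _ ((gaussianReal μ v).withDensity fun x => f x) ∧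
    ∫ x, exp (a * x) ∂(gaussianReal μ v).withDensity (fun x => f x) = _
  rw [integrable_withDensity_iff_integrable_smul hf, integral_withDensity_eq_integral_smul hf]
  simp only [hf_smul]
  refine ⟨hexp.add hsin, ?_⟩
  rw [integral_add hexp hsin, integral_exp_mul_gaussianReal,
    integral_exp_mul_mul_sin_gaussianReal]

lemma gaussianReal_withDensity_one_add_sin_ne (μ : ℝ) {v : ℝ≥0} (hv : v ≠ 0) {ω : ℝ}
    (hω : ω ≠ 0) :
    (gaussianReal μ v).withDensity (fun x => ENNReal.ofReal (1 + sin (ω * x))) ≠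
      gaussianReal μ v := by
  intro h
  have hcont : Continuous fun x => ENNReal.ofReal (1 + sin (ω * x)) :=
    ENNReal.continuous_ofReal.comp (by fun_prop)
  have hae : (fun x => ENNReal.ofReal (1 + sin (ω * x))) =ᵐ[gaussianReal μ v] 1 :=
    (withDensity_eq_iff_of_sigmaFinite hcont.measurable.aemeasurable aemeasurable_one).mp
      (h.trans withDensity_one.symm)
  have heq : (fun x => ENNReal.ofReal (1 + sin (ω * x))) = 1 :=
    (Continuous.ae_eq_iff_eq volume hcont continuous_const).mp
      (gaussianReal_absolutelyContinuous' μ hv hae)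
  have := congrFun heq (π / 2 / ω)
  norm_num [mul_div_cancel₀ _ hω] at this

theorem qmoment_sequence_indeterminate (q : ℝ) (hq0 : 0 < q) (hq1 : q < 1) :
    ∃ μ ν : Measure ℝ,
      μ = (volume.restrict (Set.Ioi (0 : ℝ))).withDensity
            (fun x => ENNReal.ofReal (vDensity q 1 x)) ∧
      IsStieltjesRepr μ (fun n => q ^ (-((n : ℝ) * (n + 1) / 2))) ∧
      IsStieltjesRepr ν (fun n => q ^ (-((n : ℝ) * (n + 1) / 2))) ∧
      μ ≠ ν := by
  set L := -log q with hL_def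
  have hL : 0 < L := neg_pos.mpr (log_neg hq0 hq1)
  set v : ℝ≥0 := L.toNNReal
  have hv : (v : ℝ) = L := coe_toNNReal _ hL.le
  set ω := 2 * π / L with hω_def
  have hmoment (n : ℕ) : q ^ (-((n : ℝ) * (n + 1) / 2)) = exp (L / 2 * n + v * n ^ 2 / 2) := by
    rw [rpow_def_of_pos hq0, hv, hL_def]
    ring_nf
  have hsin (n : ℕ) : sin (ω * (L / 2 + v * n)) = 0 := by
    have harg : ω * (L / 2 + L * n) = (2 * n + 1 : ℕ) * π := by
      rw [hω_def]
      push_cast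
      field_simp
      ring
    rw [hv, harg, sin_nat_mul_pi]
  refine ⟨_,
    ((gaussianReal (L / 2) v).withDensity fun x => ENNReal.ofReal (1 + sin (ω * x))).map exp,
    (withDensity_vDensity_one_eq_map_exp hq0 hq1).symm, ?_, ?_, ?_⟩
  · refine isStieltjesRepr_map_exp_iff.mpr fun n => ⟨integrable_exp_mul_gaussianReal _, ?_⟩
    rw [hmoment, integral_exp_mul_gaussianReal]
  · refine isStieltjesRepr_map_exp_iff.mpr fun n => ?_
    obtain ⟨hint, hval⟩ :=
      integrable_and_integral_exp_mul_withDensity_one_add_sin (L / 2) v n ω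
    exact ⟨hint, by rw [hval, hsin, mul_zero, add_zero, hmoment]⟩
  · exact fun h => gaussianReal_withDensity_one_add_sin_ne _ (toNNReal_pos.mpr hL).ne'
      (by positivity) (map_exp_injective h).symm
end
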